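/- Let p > 0. A skew-evolution semiflow C = (φ,Φ) satisfies the discrete exponential instability property if and only if there exist a constant ρ < 0 and a sequence (α_n)_{n≥0} with α_n ≥ 1 such that Σ_{k=n}^{m} e^{-pρ(m-k)} ‖Φ(k,n,x)v‖^p ≤ α_m^p ‖Φ(m,n,x)v‖^p for all naturals m ≥ n and all (x,v) ∈ X × V. -/

import Mathlib

open Real Finset

/-- An evolution semiflow on `X`. -/
def IsEvolutionSemiflow {X : Type*} (φ : ℝ → ℝ → X → X) : Prop :=
  (∀ t x, 0 ≤ t → φ t t x = x) ∧
  ∀ t s t₀ x, 0 ≤ t₀ → t₀ ≤ s → s ≤ t → φ t s (φ s t₀ x) = φ t t₀ x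

/-- An evolution cocycle over an evolution semiflow `φ`. -/
def IsEvolutionCocycle {X V : Type*} [NormedAddCommGroup V] [NormedSpace ℝ V]
    (φ : ℝ → ℝ → X → X) (Φ : ℝ → ℝ → X → (V →L[ℝ] V)) : Prop :=
  (∀ t x, 0 ≤ t → Φ t t x = ContinuousLinearMap.id ℝ V) ∧
  ∀ t s t₀ x, 0 ≤ t₀ → t₀ ≤ s → s ≤ t →
    (Φ t s (φ s t₀ x)).comp (Φ s t₀ x) = Φ t t₀ x

/-
Both properties say that the weighted quantity `e^{-ρ(m-k)} ‖Φ(k,n,x)v‖` is dominated by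
`α_m ‖Φ(m,n,x)v‖` for `k ≤ m`; the sum condition just adds `p`-th powers of such bounds. Going
from pointwise bounds to the sum costs at most the number `m + 1 - n ≤ m + 1` of terms, which is
absorbed into `α_m := (m + 1)^{1/p} a_m`. Conversely, the single term `k = n` of the sum, taken at
the point `φ(n,n₀,x)` and the vector `Φ(n,n₀,x)v`, gives back the pointwise bound by the cocycle law.
-/

theorem exp_mul_rpow_le_rpow_mul_rpow_iff {p ρ d u c w : ℝ} (hp : 0 < p) (hu : 0 ≤ u)
    (hc : 0 ≤ c) (hw : 0 ≤ w) :
    exp (-p * ρ * d) * u ^ p ≤ c ^ p * w ^ p ↔ u ≤ c * exp (ρ * d) * w := by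
  have hlhs : exp (-p * ρ * d) * u ^ p = ((exp (ρ * d))⁻¹ * u) ^ p := by
    rw [mul_rpow (inv_pos.2 (exp_pos _)).le hu, ← exp_neg, ← exp_mul]
    ring_nf
  rw [hlhs, ← mul_rpow hc hw,
    rpow_le_rpow_iff (mul_nonneg (inv_pos.2 (exp_pos _)).le hu) (mul_nonneg hc hw) hp,
    inv_mul_le_iff₀ (exp_pos _)]
  ring_nf

theorem sum_exp_mul_rpow_le_of_le_mul_exp {p ρ c : ℝ} {u : ℕ → ℝ} {n m : ℕ} (hp : 0 < p)
    (hu : ∀ k, 0 ≤ u k) (hc : 0 ≤ c)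
    (h : ∀ k ∈ Icc n m, u k ≤ c * exp (ρ * ((m : ℝ) - k)) * u m) :
    ∑ k ∈ Icc n m, exp (-p * ρ * ((m : ℝ) - k)) * u k ^ p ≤ ((m : ℝ) + 1) * (c ^ p * u m ^ p) := by
  have hterm : ∀ k ∈ Icc n m, exp (-p * ρ * ((m : ℝ) - k)) * u k ^ p ≤ c ^ p * u m ^ p :=
    fun k hk => (exp_mul_rpow_le_rpow_mul_rpow_iff hp (hu k) hc (hu m)).2 (h k hk)
  have hcard : ((#(Icc n m) : ℕ) : ℝ) ≤ (m : ℝ) + 1 := by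
    rw [Nat.card_Icc]
    exact_mod_cast Nat.sub_le (m + 1) n
  calc ∑ k ∈ Icc n m, exp (-p * ρ * ((m : ℝ) - k)) * u k ^ p
      ≤ #(Icc n m) • (c ^ p * u m ^ p) := sum_le_card_nsmul _ _ _ hterm
    _ ≤ ((m : ℝ) + 1) * (c ^ p * u m ^ p) := by
      rw [nsmul_eq_mul]
      exact mul_le_mul_of_nonneg_right hcard
        (mul_nonneg (rpow_nonneg hc _) (rpow_nonneg (hu m) _))

theorem IsEvolutionCocycle.apply_apply {X V : Type*} [NormedAddCommGroup V] [NormedSpace ℝ V]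
    {φ : ℝ → ℝ → X → X} {Φ : ℝ → ℝ → X → (V →L[ℝ] V)} (hΦ : IsEvolutionCocycle φ Φ)
    {t s t₀ : ℝ} (h₀ : 0 ≤ t₀) (hs : t₀ ≤ s) (ht : s ≤ t) (x : X) (v : V) :
    Φ t s (φ s t₀ x) (Φ s t₀ x v) = Φ t t₀ x v := by
  rw [← hΦ.2 t s t₀ x h₀ hs ht, ContinuousLinearMap.comp_apply]

theorem discrete_instable_iff_p_sum_general
    {X V : Type*} [NormedAddCommGroup V] [NormedSpace ℝ V]
    (φ : ℝ → ℝ → X → X) (Φ : ℝ → ℝ → X → (V →L[ℝ] V))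
    (hΦ : IsEvolutionCocycle φ Φ)
    (p : ℝ) (hp : 0 < p) :
    (∃ ν > (0:ℝ), ∃ a : ℕ → ℝ, (∀ n, 1 ≤ a n) ∧
      ∀ m n n₀ : ℕ, n₀ ≤ n → n ≤ m → ∀ (x : X) (v : V),
        ‖Φ n n₀ x v‖ ≤ a m * Real.exp (-ν * ((m : ℝ) - (n : ℝ))) * ‖Φ m n₀ x v‖) ↔
    (∃ ρ < (0:ℝ), ∃ α : ℕ → ℝ, (∀ n, 1 ≤ α n) ∧
      ∀ m n : ℕ, n ≤ m → ∀ (x : X) (v : V),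
        ∑ k ∈ Finset.Icc n m,
            Real.exp (-p * ρ * ((m : ℝ) - (k : ℝ))) * ‖Φ k n x v‖ ^ p ≤
          (α m) ^ p * ‖Φ m n x v‖ ^ p) := by
  constructor
  · rintro ⟨ν, hν, a, ha1, ha⟩
    have ha0 (m : ℕ) : 0 ≤ a m := zero_le_one.trans (ha1 m)
    refine ⟨-ν, neg_neg_iff_pos.2 hν, fun m => ((m : ℝ) + 1) ^ p⁻¹ * a m,
      fun n => one_le_mul_of_one_le_of_one_le (one_le_rpow (by simp) (by positivity)) (ha1 n),
      fun m n hnm x v => ?_⟩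
    rw [mul_rpow (by positivity) (ha0 m), rpow_inv_rpow (by positivity) hp.ne', mul_assoc]
    exact sum_exp_mul_rpow_le_of_le_mul_exp hp (fun k => norm_nonneg _) (ha0 m)
      fun k hk => ha m k n (mem_Icc.1 hk).1 (mem_Icc.1 hk).2 x v
  · rintro ⟨ρ, hρ, α, hα1, hα⟩
    refine ⟨-ρ, neg_pos.2 hρ, α, hα1, fun m n n₀ hn₀ hnm x v => ?_⟩
    have hcocycle {k : ℕ} (hk : n ≤ k) : Φ k n (φ n n₀ x) (Φ n n₀ x v) = Φ k n₀ x v :=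
      hΦ.apply_apply (Nat.cast_nonneg _) (Nat.cast_le.2 hn₀) (Nat.cast_le.2 hk) x v
    have hfirst : exp (-p * ρ * ((m : ℝ) - n)) * ‖Φ n n (φ n n₀ x) (Φ n n₀ x v)‖ ^ p ≤
        α m ^ p * ‖Φ m n (φ n n₀ x) (Φ n n₀ x v)‖ ^ p :=
      (single_le_sum (f := fun k : ℕ => exp (-p * ρ * ((m : ℝ) - k)) *
          ‖Φ k n (φ n n₀ x) (Φ n n₀ x v)‖ ^ p) (fun k _ => by positivity)
        (left_mem_Icc.2 hnm)).trans (hα m n hnm _ _)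
    rw [hcocycle le_rfl, hcocycle hnm, exp_mul_rpow_le_rpow_mul_rpow_iff hp (norm_nonneg _)
      (zero_le_one.trans (hα1 m)) (norm_nonneg _)] at hfirst
    rwa [neg_neg]

theorem discrete_instable_iff_p_sum
    {X V : Type*} [MetricSpace X] [NormedAddCommGroup V] [NormedSpace ℝ V] [CompleteSpace V]
    (φ : ℝ → ℝ → X → X) (Φ : ℝ → ℝ → X → (V →L[ℝ] V))
    (hφ : IsEvolutionSemiflow φ) (hΦ : IsEvolutionCocycle φ Φ)
    (p : ℝ) (hp : 0 < p) :
    (∃ ν > (0:ℝ), ∃ a : ℕ → ℝ, (∀ n, 1 ≤ a n) ∧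
      ∀ m n n₀ : ℕ, n₀ ≤ n → n ≤ m → ∀ (x : X) (v : V),
        ‖Φ n n₀ x v‖ ≤ a m * Real.exp (-ν * ((m : ℝ) - (n : ℝ))) * ‖Φ m n₀ x v‖) ↔
    (∃ ρ < (0:ℝ), ∃ α : ℕ → ℝ, (∀ n, 1 ≤ α n) ∧
      ∀ m n : ℕ, n ≤ m → ∀ (x : X) (v : V),
        ∑ k ∈ Finset.Icc n m,
            Real.exp (-p * ρ * ((m : ℝ) - (k : ℝ))) * ‖Φ k n x v‖ ^ p ≤
          (α m) ^ p * ‖Φ m n x v‖ ^ p) :=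
  discrete_instable_iff_p_sum_general φ Φ hΦ p hp
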